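/- arXiv:2211.14721 — 5 statements merged into one kernel-verified Lean document; each statement's English description precedes it below -/
import Mathlib

section
/- For positive integers L, d with L + d > 5, the function O(x, y) = (x/y - 1)² + (x²/(y² L)) (d + 1 + (1 - 6x)/x), minimized over x ∈ (0, 1/4] and y > 0, attains its minimum at x* = 1/4 and y* = (L + d - 1)/(4L). -/
/-!
Writing `s = x / y`, the objective splits as a quadratic `q(s) = (s - 1)² + s²(d - 1)/L` plus
the term `s²(1/x - 4)/L`, which is nonnegative for `x ≤ 1/4` and vanishes at `x = 1/4`.
Completing the square, `q` attains its minimum `(d - 1)/(L + d - 1)` at `s = L/(L + d - 1)`,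
and `x = 1/4`, `y = (L + d - 1)/(4L)` realises both minima at once.
-/

/-- The objective `O` of the statement, with `a = L` and `D = d` taken real. -/
noncomputable def mseObjective (a D x y : ℝ) : ℝ :=
  (x / y - 1) ^ 2 + (x ^ 2 / (y ^ 2 * a)) * (D + 1 + (1 - 6 * x) / x)

section
variable {a D : ℝ}

theorem mseObjective_eq {x y : ℝ} (hx : x ≠ 0) (hy : y ≠ 0) :
    mseObjective a D x y =
      (x / y - 1) ^ 2 + (x / y) ^ 2 * (D - 1) / a + (x / y) ^ 2 * (1 / x - 4) / a := by
  unfold mseObjective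
  field_simp
  ring

theorem sub_one_sq_add_eq_completed_square (ha : a ≠ 0) (hM : a + D - 1 ≠ 0) (s : ℝ) :
    (s - 1) ^ 2 + s ^ 2 * (D - 1) / a =
      (a + D - 1) / a * (s - a / (a + D - 1)) ^ 2 + (D - 1) / (a + D - 1) := by
  field_simp
  ring

theorem div_le_mseObjective (ha : 0 < a) (hM : 0 < a + D - 1) {x y : ℝ} (hx : 0 < x)
    (hx4 : x ≤ 1 / 4) (hy : 0 < y) :
    (D - 1) / (a + D - 1) ≤ mseObjective a D x y := by
  have hsquare : 0 ≤ (a + D - 1) / a * (x / y - a / (a + D - 1)) ^ 2 := by positivity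
  have hslack : 0 ≤ (x / y) ^ 2 * (1 / x - 4) / a := by
    have : 4 ≤ 1 / x := by rw [le_div_iff₀ hx]; linarith
    have : 0 ≤ 1 / x - 4 := by linarith
    positivity
  rw [mseObjective_eq hx.ne' hy.ne', sub_one_sq_add_eq_completed_square ha.ne' hM.ne']
  linarith

theorem mseObjective_optimum (hM : a + D - 1 ≠ 0) :
    mseObjective a D (1 / 4) ((a + D - 1) / (4 * a)) = (D - 1) / (a + D - 1) := by
  unfold mseObjective
  field_simp
  ring

end

theorem stmt_4_general (L d : ℕ) (hL : 0 < L) (hd : 0 < d) :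
    let O : ℝ → ℝ → ℝ := fun x y =>
      (x / y - 1) ^ 2 + (x ^ 2 / (y ^ 2 * L)) * ((d : ℝ) + 1 + (1 - 6 * x) / x)
    let xstar : ℝ := 1 / 4
    let ystar : ℝ := ((L : ℝ) + d - 1) / (4 * L)
    (0 < xstar ∧ xstar ≤ 1 / 4) ∧ 0 < ystar ∧
      ∀ x y : ℝ, 0 < x → x ≤ 1 / 4 → 0 < y → O xstar ystar ≤ O x y := by
  intro O xstar ystar
  have hL' : (0 : ℝ) < L := by exact_mod_cast hL
  have hM : (0 : ℝ) < L + d - 1 := by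
    have : (1 : ℝ) ≤ d := by exact_mod_cast hd
    linarith
  refine ⟨by norm_num, by positivity, fun x y hx hx4 hy => ?_⟩
  change mseObjective L d (1 / 4) ((L + d - 1) / (4 * L)) ≤ mseObjective L d x y
  rw [mseObjective_optimum hM.ne']
  exact div_le_mseObjective hL' hM hx hx4 hy

/-- For positive integers `L, d` with `L + d > 5`, the function
`O(x,y) = (x/y - 1)² + (x²/(y²L))(d + 1 + (1-6x)/x)`, minimized over
`x ∈ (0, 1/4]` and `y > 0`, attains its minimum at `x* = 1/4` and
`y* = (L+d-1)/(4L)`. -/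
theorem stmt_4 (L d : ℕ) (hL : 0 < L) (hd : 0 < d) (h : 5 < L + d) :
    let O : ℝ → ℝ → ℝ := fun x y =>
      (x / y - 1) ^ 2 + (x ^ 2 / (y ^ 2 * L)) * ((d : ℝ) + 1 + (1 - 6 * x) / x)
    let xstar : ℝ := 1 / 4
    let ystar : ℝ := ((L : ℝ) + d - 1) / (4 * L)
    (0 < xstar ∧ xstar ≤ 1 / 4) ∧ 0 < ystar ∧
      ∀ x y : ℝ, 0 < x → x ≤ 1 / 4 → 0 < y → O xstar ystar ≤ O x y :=
  stmt_4_general L d hL hd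
end

section
/- Let L, d, N be positive integers and a, b ≥ 0. Define MSE(σ², k) = (σ²-1)² a + (σ⁴/L)(d+k-2) a + (σ⁴/(LN))(d+k-1) b. Then with σ*² = L/(L+d+1), MSE(σ*², 3) ≤ MSE(1, 3), with strict inequality if a + b > 0 and d ≥ 1. -/
/-!
Write `c = (d + 1) / L`, so that `σ*² = 1 / (1 + c)` and
`MSE(s, 3) = a ((s - 1)² + c s²) + b (d + 2) s² / (L N)`.
The `a`-part is the quadratic `(s - 1)² + c s²`, minimised exactly at `s = 1 / (1 + c)`,
where it equals `c / (1 + c) < c`; the `b`-part increases with `s²`, and `σ*² < 1`.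
-/

lemma sub_one_sq_add_mul_sq_lt_of_eq_inv_one_add {c s : ℝ} (hc : 0 < c) (hs : s = (1 + c)⁻¹) :
    (s - 1) ^ 2 + c * s ^ 2 < c := by
  have key : (s - 1) ^ 2 + c * s ^ 2 = c / (1 + c) := by
    subst hs
    field_simp
    ring
  rw [key, div_lt_iff₀ (by positivity)]
  nlinarith

lemma add_mul_le_add_mul_and_lt_of_lt {a b x₁ x₂ y₁ y₂ : ℝ} (ha : 0 ≤ a) (hb : 0 ≤ b)
    (h₁ : x₁ < y₁) (h₂ : x₂ < y₂) :
    a * x₁ + b * x₂ ≤ a * y₁ + b * y₂ ∧ (0 < a + b → a * x₁ + b * x₂ < a * y₁ + b * y₂) := by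
  refine ⟨by gcongr, fun hab => ?_⟩
  rcases ha.eq_or_lt with rfl | ha'
  · simp only [zero_add, zero_mul] at hab ⊢
    gcongr
  · have : b * x₂ ≤ b * y₂ := by gcongr
    have : a * x₁ < a * y₁ := by gcongr
    linarith

theorem stmt_8_general (L d N : ℕ) (hL : 0 < L) (hN : 0 < N)
    (a b : ℝ) (ha : 0 ≤ a) (hb : 0 ≤ b) :
    let MSE : ℝ → ℝ → ℝ := fun s k =>
      (s - 1) ^ 2 * a + (s ^ 2 / L) * ((d : ℝ) + k - 2) * a
        + (s ^ 2 / (L * N)) * ((d : ℝ) + k - 1) * b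
    let sstar : ℝ := (L : ℝ) / ((L : ℝ) + d + 1)
    MSE sstar 3 ≤ MSE 1 3 ∧ (0 < a + b → MSE sstar 3 < MSE 1 3) := by
  intro MSE sstar
  set c : ℝ := ((d : ℝ) + 1) / L
  set κ : ℝ := ((d : ℝ) + 2) / (L * N)
  have hc : 0 < c := by positivity
  have hκ : 0 < κ := by positivity
  have hsstar : sstar = (1 + c)⁻¹ := by
    simp only [sstar, c]
    field_simp
    ring
  have hMSE (s : ℝ) : MSE s 3 = a * ((s - 1) ^ 2 + c * s ^ 2) + b * (κ * s ^ 2) := by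
    simp only [MSE, c, κ]
    ring
  have hsstar_sq : sstar ^ 2 < 1 := by
    rw [hsstar, inv_pow]
    exact inv_lt_one_of_one_lt₀ (one_lt_pow₀ (by linarith) two_ne_zero)
  rw [hMSE, hMSE]
  apply add_mul_le_add_mul_and_lt_of_lt ha hb
  · simpa using sub_one_sq_add_mul_sq_lt_of_eq_inv_one_add hc hsstar
  · simpa using mul_lt_mul_of_pos_left hsstar_sq hκ

/-- With `MSE(σ²,k) = (σ²-1)² a + (σ⁴/L)(d+k-2) a + (σ⁴/(LN))(d+k-1) b`, setting
`σ*² = L/(L+d+1)` gives `MSE(σ*²,3) ≤ MSE(1,3)`, strictly if `a + b > 0`. -/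
theorem stmt_8 (L d N : ℕ) (hL : 0 < L) (hd : 1 ≤ d) (hN : 0 < N)
    (a b : ℝ) (ha : 0 ≤ a) (hb : 0 ≤ b) :
    let MSE : ℝ → ℝ → ℝ := fun s k =>
      (s - 1) ^ 2 * a + (s ^ 2 / L) * ((d : ℝ) + k - 2) * a
        + (s ^ 2 / (L * N)) * ((d : ℝ) + k - 1) * b
    let sstar : ℝ := (L : ℝ) / ((L : ℝ) + d + 1)
    MSE sstar 3 ≤ MSE 1 3 ∧ (0 < a + b → MSE sstar 3 < MSE 1 3) :=
  stmt_8_general L d N hL hN a b ha hb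
end

section
/- Let L, d, N be positive integers with L + d > 5 and a, b ≥ 0. With MSE(σ², k) as below, let m* = sqrt((L+d-1)/(4L)) and σ*² = 1/(4 m*²) = L/(L+d-1). Then MSE(σ*², 1) ≤ MSE(1, 1), with strict inequality if a + b > 0 and d ≥ 2. -/
/-!
Writing `q = MSE(1,1) = (d-1)a/L + d b/(LN)`, the MSE at `k = 1` is the quadratic
`MSE(s,1) = (s-1)² a + s² q`, and `q - MSE(s,1) = (1-s)((1+s)q - (1-s)a)`.
At `s = σ*² = L/(L+d-1)` one has `(1-s) a = (d-1)a/(L+d-1) ≤ (d-1)a/L ≤ q`, so this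
difference is at least `(1-s) s q ≥ 0`, and it is positive once `s < 1` (i.e. `d ≥ 2`)
and `q > 0` (i.e. `a + b > 0`).
-/

lemma one_div_four_mul_sq_sqrt_div {x y : ℝ} (hx : 0 ≤ x) (hy : 0 ≤ y) :
    1 / (4 * √(x / (4 * y)) ^ 2) = y / x := by
  rw [Real.sq_sqrt (by positivity), mul_div_assoc', mul_div_mul_left _ _ four_ne_zero, one_div_div]

lemma one_sub_div_add_le_div {x y : ℝ} (hx : 0 < x) (hy : 0 ≤ y) :
    1 - x / (x + y) ≤ y / x := by
  rw [one_sub_div (add_pos_of_pos_of_nonneg hx hy).ne', add_sub_cancel_left]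
  exact div_le_div_of_nonneg_left hy hx (by linarith)

section Quadratic

variable {s a q : ℝ}

lemma sub_one_sq_mul_add_sq_mul_le (hs0 : 0 ≤ s) (hs1 : s ≤ 1) (hq : 0 ≤ q)
    (h : (1 - s) * a ≤ q) : (s - 1) ^ 2 * a + s ^ 2 * q ≤ q := by
  nlinarith [mul_nonneg (sub_nonneg.2 hs1) (sub_nonneg.2 h),
    mul_nonneg (mul_nonneg (sub_nonneg.2 hs1) hs0) hq]

lemma sub_one_sq_mul_add_sq_mul_lt (hs0 : 0 < s) (hs1 : s < 1) (hq : 0 < q)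
    (h : (1 - s) * a ≤ q) : (s - 1) ^ 2 * a + s ^ 2 * q < q := by
  nlinarith [mul_nonneg (sub_nonneg.2 hs1.le) (sub_nonneg.2 h),
    mul_pos (mul_pos (sub_pos.2 hs1) hs0) hq]

end Quadratic

theorem stmt_9_general (L d N : ℕ) (hL : 0 < L) (hd : 0 < d) (hN : 0 < N)
    (a b : ℝ) (ha : 0 ≤ a) (hb : 0 ≤ b) :
    let MSE : ℝ → ℝ → ℝ := fun s k =>
      (s - 1) ^ 2 * a + (s ^ 2 / L) * ((d : ℝ) + k - 2) * a
        + (s ^ 2 / (L * N)) * ((d : ℝ) + k - 1) * b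
    let mstar : ℝ := Real.sqrt (((L : ℝ) + d - 1) / (4 * L))
    let sstar : ℝ := 1 / (4 * mstar ^ 2)
    sstar = (L : ℝ) / ((L : ℝ) + d - 1) ∧ MSE sstar 1 ≤ MSE 1 1 ∧
      (0 < a + b → 2 ≤ d → MSE sstar 1 < MSE 1 1) := by
  intro MSE mstar sstar
  have hL' : (0 : ℝ) < L := by exact_mod_cast hL
  have hd' : (1 : ℝ) ≤ d := by exact_mod_cast hd
  have hN' : (0 : ℝ) < N := by exact_mod_cast hN
  have hs : sstar = L / (L + (d - 1)) := by
    rw [← add_sub_assoc]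
    exact one_div_four_mul_sq_sqrt_div (by linarith) hL'.le
  set q : ℝ := (d - 1) / L * a + d / (L * N) * b
  have hMSE (s : ℝ) : MSE s 1 = (s - 1) ^ 2 * a + s ^ 2 * q := by
    simp only [MSE, q]; ring
  have hq : 0 ≤ q := by have := sub_nonneg.2 hd'; positivity
  have hs0 : 0 < sstar := by rw [hs]; exact div_pos hL' (by linarith)
  have hs1 : sstar ≤ 1 := by rw [hs]; exact div_le_one_of_le₀ (by linarith) (by linarith)
  have hgap : (1 - sstar) * a ≤ q := calc
    (1 - sstar) * a ≤ (d - 1) / L * a :=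
      mul_le_mul_of_nonneg_right (hs ▸ one_sub_div_add_le_div hL' (by linarith)) ha
    _ ≤ q := le_add_of_nonneg_right (by positivity)
  rw [hMSE, hMSE, one_pow, sub_self, zero_pow two_ne_zero, zero_mul, zero_add, one_mul]
  refine ⟨hs.trans (by ring), sub_one_sq_mul_add_sq_mul_le hs0.le hs1 hq hgap, fun hab hd2 => ?_⟩
  have hd2' : (2 : ℝ) ≤ d := by exact_mod_cast hd2
  have hq0 : 0 < q := by
    rcases ha.eq_or_lt with rfl | ha0
    · have : 0 < b := by linarith
      have : (0 : ℝ) < d := by linarith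
      simp only [q, mul_zero, zero_add]; positivity
    · have : (0 : ℝ) < d - 1 := by linarith
      exact add_pos_of_pos_of_nonneg (by positivity) (by positivity)
  have hs1' : sstar < 1 := by rw [hs]; exact (div_lt_one (by linarith)).2 (by linarith)
  exact sub_one_sq_mul_add_sq_mul_lt hs0 hs1' hq0 hgap

/-- With `MSE(σ²,k) = (σ²-1)² a + (σ⁴/L)(d+k-2) a + (σ⁴/(LN))(d+k-1) b`, for
`L + d > 5`, setting `m* = √((L+d-1)/(4L))` and `σ*² = 1/(4m*²) = L/(L+d-1)`
gives `MSE(σ*²,1) ≤ MSE(1,1)`, strictly if `a + b > 0` and `d ≥ 2`. -/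
theorem stmt_9 (L d N : ℕ) (hL : 0 < L) (hd : 0 < d) (hN : 0 < N) (h : 5 < L + d)
    (a b : ℝ) (ha : 0 ≤ a) (hb : 0 ≤ b) :
    let MSE : ℝ → ℝ → ℝ := fun s k =>
      (s - 1) ^ 2 * a + (s ^ 2 / L) * ((d : ℝ) + k - 2) * a
        + (s ^ 2 / (L * N)) * ((d : ℝ) + k - 1) * b
    let mstar : ℝ := Real.sqrt (((L : ℝ) + d - 1) / (4 * L))
    let sstar : ℝ := 1 / (4 * mstar ^ 2)
    sstar = (L : ℝ) / ((L : ℝ) + d - 1) ∧ MSE sstar 1 ≤ MSE 1 1 ∧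
      (0 < a + b → 2 ≤ d → MSE sstar 1 < MSE 1 1) :=
  stmt_9_general L d N hL hd hN a b ha hb
end

section
/- If L² - 2L + 2 < (d+1)² and b > 0, then the asymptotic MSE of GS-shrinkage is strictly smaller than that of BeS-shrinkage when a = 0; conversely, if a > (d+1)² b / (N (L+d-1)(L+d+1)) (in particular if a is sufficiently large relative to b/N), the MSE of BeS-shrinkage is strictly smaller. -/
/-!
Both MSEs are explicit rational functions, and their difference factors as
`2L / ((L+d-1)(L+d+1)) · (a + (L² - 2L + 2 - (d+1)²) / (N(L+d-1)(L+d+1)) · b)`.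
The prefactor is positive, so everything reduces to the sign of the bracket: for `a = 0` it has
the sign of `L² - 2L + 2 - (d+1)²`, and since `L² - 2L + 2 = (L-1)² + 1 ≥ 0` the bracket is
positive as soon as `a` exceeds `(d+1)² b / (N(L+d-1)(L+d+1))`.
-/

noncomputable def mseGS (L d N a b : ℝ) : ℝ :=
  ((d + 1) ^ 2 + L * (d + 1)) / (L + d + 1) ^ 2 * a + L * (d + 2) / (N * (L + d + 1) ^ 2) * b

noncomputable def mseBeS (L d N a b : ℝ) : ℝ :=
  ((d - 1) ^ 2 + L * (d - 1)) / (L + d - 1) ^ 2 * a + d * L / (N * (L + d - 1) ^ 2) * b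

section Comparison

variable {L d N : ℝ}

theorem mseGS_sub_mseBeS (h₁ : L + d - 1 ≠ 0) (h₂ : L + d + 1 ≠ 0) (hN : N ≠ 0)
    (a b : ℝ) :
    mseGS L d N a b - mseBeS L d N a b =
      2 * L / ((L + d - 1) * (L + d + 1)) *
        (a + (L ^ 2 - 2 * L + 2 - (d + 1) ^ 2) / (N * (L + d - 1) * (L + d + 1)) * b) := by
  unfold mseGS mseBeS
  field_simp
  ring

variable (hL : 0 < L) (hLd : 1 < L + d) (hN : 0 < N)
include hL hLd hN

theorem mseGS_lt_mseBeS_of_zero {b : ℝ} (hb : 0 < b)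
    (hc : L ^ 2 - 2 * L + 2 < (d + 1) ^ 2) :
    mseGS L d N 0 b < mseBeS L d N 0 b := by
  have hLd₁ : 0 < L + d - 1 := by linarith
  rw [← sub_neg, mseGS_sub_mseBeS hLd₁.ne' (by linarith) hN.ne', zero_add]
  refine mul_neg_of_pos_of_neg (by positivity) (mul_neg_of_neg_of_pos ?_ hb)
  exact div_neg_of_neg_of_pos (by linarith) (by positivity)

theorem mseBeS_lt_mseGS {a b : ℝ} (hb : 0 ≤ b)
    (ha : (d + 1) ^ 2 * b / (N * (L + d - 1) * (L + d + 1)) < a) :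
    mseBeS L d N a b < mseGS L d N a b := by
  have hLd₁ : 0 < L + d - 1 := by linarith
  have hden : 0 < N * (L + d - 1) * (L + d + 1) := by positivity
  rw [← sub_pos, mseGS_sub_mseBeS hLd₁.ne' (by linarith) hN.ne']
  refine mul_pos (by positivity) ?_
  have hbracket : -((d + 1) ^ 2 * b / (N * (L + d - 1) * (L + d + 1))) ≤
      (L ^ 2 - 2 * L + 2 - (d + 1) ^ 2) / (N * (L + d - 1) * (L + d + 1)) * b := by
    rw [div_mul_eq_mul_div, ← neg_div]
    gcongr
    nlinarith [sq_nonneg (L - 1)]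
  linarith

end Comparison

theorem stmt_11_general (L d N : ℕ) (hL : 0 < L) (hd : 0 < d) (hN : 0 < N)
    (a b : ℝ) (hb : 0 ≤ b) :
    let MSEGSs : ℝ := (((d : ℝ) + 1) ^ 2 + L * ((d : ℝ) + 1)) / ((L : ℝ) + d + 1) ^ 2 * a
      + (L : ℝ) * ((d : ℝ) + 2) / (N * ((L : ℝ) + d + 1) ^ 2) * b
    let MSEBeSs : ℝ := (((d : ℝ) - 1) ^ 2 + L * ((d : ℝ) - 1)) / ((L : ℝ) + d - 1) ^ 2 * a
      + (d : ℝ) * L / (N * ((L : ℝ) + d - 1) ^ 2) * b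
    ((L : ℝ) ^ 2 - 2 * L + 2 < ((d : ℝ) + 1) ^ 2 → 0 < b → a = 0 → MSEGSs < MSEBeSs) ∧
      (((d : ℝ) + 1) ^ 2 * b / (N * ((L : ℝ) + d - 1) * ((L : ℝ) + d + 1)) < a
        → MSEBeSs < MSEGSs) := by
  intro MSEGSs MSEBeSs
  have hL' : (0 : ℝ) < L := by exact_mod_cast hL
  have hLd : (1 : ℝ) < L + d := by
    have : (2 : ℝ) ≤ L + d := by exact_mod_cast Nat.add_le_add hL hd
    linarith
  have hN' : (0 : ℝ) < N := by exact_mod_cast hN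
  refine ⟨fun hc hb' ha => ?_, mseBeS_lt_mseGS hL' hLd hN' hb⟩
  subst ha
  exact mseGS_lt_mseBeS_of_zero hL' hLd hN' hb' hc

/-- If `L² - 2L + 2 < (d+1)²` and `b > 0`, then the asymptotic MSE of
GS-shrinkage is strictly smaller than that of BeS-shrinkage when `a = 0`;
conversely, if `a > (d+1)² b/(N(L+d-1)(L+d+1))`, the MSE of BeS-shrinkage is
strictly smaller. -/
theorem stmt_11 (L d N : ℕ) (hL : 0 < L) (hd : 0 < d) (hN : 0 < N)
    (a b : ℝ) (ha : 0 ≤ a) (hb : 0 ≤ b) :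
    let MSEGSs : ℝ := (((d : ℝ) + 1) ^ 2 + L * ((d : ℝ) + 1)) / ((L : ℝ) + d + 1) ^ 2 * a
      + (L : ℝ) * ((d : ℝ) + 2) / (N * ((L : ℝ) + d + 1) ^ 2) * b
    let MSEBeSs : ℝ := (((d : ℝ) - 1) ^ 2 + L * ((d : ℝ) - 1)) / ((L : ℝ) + d - 1) ^ 2 * a
      + (d : ℝ) * L / (N * ((L : ℝ) + d - 1) ^ 2) * b
    ((L : ℝ) ^ 2 - 2 * L + 2 < ((d : ℝ) + 1) ^ 2 → 0 < b → a = 0 → MSEGSs < MSEBeSs) ∧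
      (((d : ℝ) + 1) ^ 2 * b / (N * ((L : ℝ) + d - 1) * ((L : ℝ) + d + 1)) < a
        → MSEBeSs < MSEGSs) :=
  stmt_11_general L d N hL hd hN a b hb
end

section
/- Suppose F: ℝ^d → ℝ is differentiable and μ-smooth, bounded in absolute value by Δ, and stochastic gradient estimates g^t satisfy ‖E[g^t] - ∇F(θ^t)‖ ≤ B ‖∇F(θ^t)‖ and E[‖g^t - ∇F(θ^t)‖²] ≤ M at every iterate of the update θ^{t+1} = θ^t - η g^t run for T steps. If B < 1/2 and η = 1/(μ√T), then (1/T) Σ_{t=0}^{T-1} E[‖∇F(θ^t)‖²] ≤ (M + 4Δμ) / ((1 - 2B) √T). -/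
/-!
Smoothness gives the descent inequality `F (x - η g) ≤ F x - η ⟪∇F x, g⟫ + μη²/2 ‖g‖²`.
Writing `g = ∇F x + e` and taking expectations, pulling the `ℱ t`-measurable `∇F(θᵗ)` out of the
conditional expectation turns the bias bound into `E ⟪e, ∇F(θᵗ)⟫ ≥ -B E ‖∇F(θᵗ)‖²`, and the MSE
bound gives `E ‖e‖² ≤ M`. Since `μη ≤ 1` this yields
`η(1-2B)/2 · E ‖∇F(θᵗ)‖² ≤ E F(θᵗ) - E F(θᵗ⁺¹) + μη²M/2`. Summed over `t < T` the right-hand side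
telescopes to at most `2Δ + Tμη²M/2`, and `η = 1/(μ√T)` balances the two terms.
-/

open MeasureTheory ProbabilityTheory
open scoped RealInnerProductSpace

section Descent

variable {E : Type*} [NormedAddCommGroup E] [InnerProductSpace ℝ E] [CompleteSpace E]
  {F : E → ℝ} {F' : E → E} {μ : ℝ}

theorem le_add_inner_add_of_lipschitz_gradient (hF : ∀ x, HasGradientAt F (F' x) x)
    (hsmooth : ∀ x y, ‖F' x - F' y‖ ≤ μ * ‖x - y‖) (x v : E) :
    F (x + v) ≤ F x + ⟪F' x, v⟫ + μ / 2 * ‖v‖ ^ 2 := by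
  let φ : ℝ → ℝ := fun t => F (x + t • v) - t * ⟪F' x, v⟫ - μ / 2 * t ^ 2 * ‖v‖ ^ 2
  have hφ : ∀ t, HasDerivAt φ (⟪F' (x + t • v), v⟫ - ⟪F' x, v⟫ - μ * t * ‖v‖ ^ 2) t := by
    intro t
    have hline : HasDerivAt (fun t : ℝ => x + t • v) v t := by
      simpa using ((hasDerivAt_id t).smul_const v).const_add x
    have hFline : HasDerivAt (fun t : ℝ => F (x + t • v)) ⟪F' (x + t • v), v⟫ t := by
      simpa [Function.comp_def] using
        (hasGradientAt_iff_hasFDerivAt.1 (hF _)).comp_hasDerivAt t hline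
    refine ((hFline.sub ((hasDerivAt_id t).mul_const ⟪F' x, v⟫)).sub
      (((hasDerivAt_pow 2 t).const_mul (μ / 2)).mul_const (‖v‖ ^ 2))).congr_deriv ?_
    simp only [Nat.cast_ofNat, one_mul]
    ring
  have hslope : ∀ t ∈ interior (Set.Icc (0 : ℝ) 1),
      ⟪F' (x + t • v), v⟫ - ⟪F' x, v⟫ - μ * t * ‖v‖ ^ 2 ≤ 0 := by
    intro t ht
    rw [interior_Icc] at ht
    have : ⟪F' (x + t • v), v⟫ - ⟪F' x, v⟫ ≤ μ * t * ‖v‖ ^ 2 :=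
      calc ⟪F' (x + t • v), v⟫ - ⟪F' x, v⟫ = ⟪F' (x + t • v) - F' x, v⟫ :=
            (inner_sub_left _ _ _).symm
        _ ≤ ‖F' (x + t • v) - F' x‖ * ‖v‖ := real_inner_le_norm _ _
        _ ≤ μ * ‖t • v‖ * ‖v‖ := by
            gcongr
            simpa using hsmooth (x + t • v) x
        _ = μ * t * ‖v‖ ^ 2 := by
            rw [norm_smul, Real.norm_of_nonneg ht.1.le]
            ring
    linarith
  have hφ10 := antitoneOn_of_hasDerivWithinAt_nonpos (convex_Icc 0 1)
    (fun t _ => (hφ t).continuousAt.continuousWithinAt) (fun t _ => (hφ t).hasDerivWithinAt)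
    hslope (Set.left_mem_Icc.2 zero_le_one) (Set.right_mem_Icc.2 zero_le_one) zero_le_one
  norm_num [φ] at hφ10
  linarith

theorem apply_sub_smul_le_of_lipschitz_gradient (hF : ∀ x, HasGradientAt F (F' x) x)
    (hsmooth : ∀ x y, ‖F' x - F' y‖ ≤ μ * ‖x - y‖) (x g : E) (η : ℝ) :
    F (x - η • g) ≤ F x + (μ * η ^ 2 / 2 - η) * ‖F' x‖ ^ 2
      + (μ * η ^ 2 - η) * ⟪g - F' x, F' x⟫ + μ * η ^ 2 / 2 * ‖g - F' x‖ ^ 2 := by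
  have h := le_add_inner_add_of_lipschitz_gradient hF hsmooth x (-(η • g))
  rw [← sub_eq_add_neg] at h
  obtain ⟨e, rfl⟩ : ∃ e, g = F' x + e := ⟨g - F' x, by abel⟩
  rw [inner_neg_right, norm_neg, norm_smul, inner_smul_right, mul_pow, Real.norm_eq_abs, sq_abs,
    norm_add_sq_real, inner_add_right, real_inner_self_eq_norm_sq] at h
  rw [add_sub_cancel_left, real_inner_comm (F' x) e]
  linarith

end Descent

section Conditional

variable {Ω E : Type*} [NormedAddCommGroup E] [InnerProductSpace ℝ E]
  {m mΩ : MeasurableSpace Ω} {P : Measure[mΩ] Ω}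

theorem MeasureTheory.MemLp.integrable_inner {f g : Ω → E} (hf : MemLp f 2 P)
    (hg : MemLp g 2 P) : Integrable (fun ω => ⟪f ω, g ω⟫) P :=
  memLp_one_iff_integrable.1 ((innerSL ℝ).memLp_of_bilin 1 hf hg)

theorem integral_le_of_condExp_le [IsProbabilityMeasure P] (hm : m ≤ mΩ) {f : Ω → ℝ} {M : ℝ}
    (hf : ∀ᵐ ω ∂P, P[f | m] ω ≤ M) : ∫ ω, f ω ∂P ≤ M :=
  calc ∫ ω, f ω ∂P = ∫ ω, P[f | m] ω ∂P := (integral_condExp hm).symm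
    _ ≤ ∫ _, M ∂P := integral_mono_ae integrable_condExp (integrable_const M) hf
    _ = M := by simp

/-- By the pull-out property, `E[⟪c, g - c⟫ | m] = ⟪c, E[g | m] - c⟫` for `m`-measurable `c`. -/
theorem neg_mul_integral_le_integral_inner_of_condExp_bias [CompleteSpace E] [IsFiniteMeasure P]
    (hm : m ≤ mΩ) {c g : Ω → E} {B : ℝ} (hc : StronglyMeasurable[m] c) (hcL2 : MemLp c 2 P)
    (hgL2 : MemLp g 2 P) (hbias : ∀ᵐ ω ∂P, ‖P[g | m] ω - c ω‖ ≤ B * ‖c ω‖) :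
    -(B * ∫ ω, ‖c ω‖ ^ 2 ∂P) ≤ ∫ ω, ⟪g ω - c ω, c ω⟫ ∂P := by
  have hc1 : Integrable c P := hcL2.integrable one_le_two
  have hg1 : Integrable g P := hgL2.integrable one_le_two
  have hpull : P[fun ω => ⟪c ω, g ω - c ω⟫ | m] =ᵐ[P] fun ω => ⟪c ω, P[g | m] ω - c ω⟫ := by
    filter_upwards [condExp_bilin_of_stronglyMeasurable_left (innerSL ℝ) hc
      (hcL2.integrable_inner (hgL2.sub hcL2)) (hg1.sub hc1), condExp_sub hg1 hc1 m] with ω h₁ h₂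
    rw [condExp_of_stronglyMeasurable hm hc hc1] at h₂
    rw [h₂] at h₁
    exact h₁
  calc -(B * ∫ ω, ‖c ω‖ ^ 2 ∂P) = ∫ ω, -(B * ‖c ω‖ ^ 2) ∂P := by
        rw [integral_neg, integral_const_mul]
    _ ≤ ∫ ω, P[fun ω => ⟪c ω, g ω - c ω⟫ | m] ω ∂P := by
        refine integral_mono_ae (hcL2.norm.integrable_sq.const_mul B).neg integrable_condExp ?_
        filter_upwards [hpull, hbias] with ω h₁ h₂
        rw [h₁]
        calc -(B * ‖c ω‖ ^ 2) ≤ -(‖c ω‖ * ‖P[g | m] ω - c ω‖) := by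
              nlinarith [mul_le_mul_of_nonneg_left h₂ (norm_nonneg (c ω))]
          _ ≤ ⟪c ω, P[g | m] ω - c ω⟫ := neg_le_of_abs_le (abs_real_inner_le_norm _ _)
    _ = ∫ ω, ⟪g ω - c ω, c ω⟫ ∂P := by
        simp_rw [integral_condExp hm, real_inner_comm]

end Conditional

theorem integral_descent_of_biased_gradient_step {Ω E : Type*} [NormedAddCommGroup E]
    [InnerProductSpace ℝ E] [CompleteSpace E] {m mΩ : MeasurableSpace Ω} {P : Measure[mΩ] Ω}
    [IsProbabilityMeasure P]
    {F : E → ℝ} {F' : E → E} {μ B M η : ℝ} (hm : m ≤ mΩ) (hF : ∀ x, HasGradientAt F (F' x) x)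
    (hsmooth : ∀ x y, ‖F' x - F' y‖ ≤ μ * ‖x - y‖) (hμ : 0 ≤ μ) (hB : 0 ≤ B) (hη : 0 ≤ η)
    (hμη : μ * η ≤ 1) {x g : Ω → E} (hF'x : StronglyMeasurable[m] fun ω => F' (x ω))
    (hF'xL2 : MemLp (fun ω => F' (x ω)) 2 P) (hgL2 : MemLp g 2 P)
    (hFx : Integrable (fun ω => F (x ω)) P) (hFx' : Integrable (fun ω => F (x ω - η • g ω)) P)
    (hbias : ∀ᵐ ω ∂P, ‖P[g | m] ω - F' (x ω)‖ ≤ B * ‖F' (x ω)‖)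
    (hmse : ∀ᵐ ω ∂P, P[fun ω => ‖g ω - F' (x ω)‖ ^ 2 | m] ω ≤ M) :
    η * (1 - 2 * B) / 2 * ∫ ω, ‖F' (x ω)‖ ^ 2 ∂P
      ≤ ∫ ω, F (x ω) ∂P - ∫ ω, F (x ω - η • g ω) ∂P + μ * η ^ 2 / 2 * M := by
  have heL2 : MemLp (fun ω => g ω - F' (x ω)) 2 P := hgL2.sub hF'xL2
  have i₁ := (hF'xL2.norm.integrable_sq).const_mul (μ * η ^ 2 / 2 - η)
  have i₂ := (heL2.integrable_inner hF'xL2).const_mul (μ * η ^ 2 - η)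
  have i₃ := (heL2.norm.integrable_sq).const_mul (μ * η ^ 2 / 2)
  have hdescent : ∫ ω, F (x ω - η • g ω) ∂P ≤ ∫ ω, F (x ω) ∂P
      + (μ * η ^ 2 / 2 - η) * ∫ ω, ‖F' (x ω)‖ ^ 2 ∂P
      + (μ * η ^ 2 - η) * ∫ ω, ⟪g ω - F' (x ω), F' (x ω)⟫ ∂P
      + μ * η ^ 2 / 2 * ∫ ω, ‖g ω - F' (x ω)‖ ^ 2 ∂P := by
    calc ∫ ω, F (x ω - η • g ω) ∂P
        ≤ ∫ ω, (F (x ω) + (μ * η ^ 2 / 2 - η) * ‖F' (x ω)‖ ^ 2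
          + (μ * η ^ 2 - η) * ⟪g ω - F' (x ω), F' (x ω)⟫
          + μ * η ^ 2 / 2 * ‖g ω - F' (x ω)‖ ^ 2) ∂P :=
          integral_mono hFx' (((hFx.add i₁).add i₂).add i₃)
            fun ω => apply_sub_smul_le_of_lipschitz_gradient hF hsmooth (x ω) (g ω) η
      _ = _ := by
          rw [integral_add ?_ i₃, integral_add ?_ i₂, integral_add hFx i₁, integral_const_mul,
            integral_const_mul, integral_const_mul]
          exacts [hFx.add i₁, (hFx.add i₁).add i₂]
  have hcorr := neg_mul_integral_le_integral_inner_of_condExp_bias hm hF'x hF'xL2 hgL2 hbias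
  have hmse' := integral_le_of_condExp_le hm hmse
  have hnorm : 0 ≤ ∫ ω, ‖F' (x ω)‖ ^ 2 ∂P := integral_nonneg fun _ => sq_nonneg _
  -- `μη ≤ 1` makes the coefficient `μη² - η` of the correlation term nonpositive, and then the
  -- total coefficient of `∫ ‖F' x‖²` is `-η(1-2B)/2 - η(1-μη)/2 - Bμη² ≤ -η(1-2B)/2`.
  nlinarith [mul_nonneg (mul_nonneg hη (sub_nonneg.2 hμη)) (neg_le_iff_add_nonneg.1 hcorr),
    mul_le_mul_of_nonneg_left hmse' (by positivity : 0 ≤ μ * η ^ 2 / 2),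
    mul_nonneg (mul_nonneg hη (sub_nonneg.2 hμη)) hnorm,
    mul_nonneg (by positivity : 0 ≤ B * μ * η ^ 2) hnorm]

theorem sum_range_le_of_le_sub_add {a b : ℕ → ℝ} {Δ C : ℝ} (ha : ∀ t, |a t| ≤ Δ)
    (hab : ∀ t, b t ≤ a t - a (t + 1) + C) (T : ℕ) :
    ∑ t ∈ Finset.range T, b t ≤ 2 * Δ + T * C :=
  calc ∑ t ∈ Finset.range T, b t ≤ ∑ t ∈ Finset.range T, (a t - a (t + 1) + C) :=
        Finset.sum_le_sum fun t _ => hab t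
    _ = a 0 - a T + T * C := by
        rw [Finset.sum_add_distrib, Finset.sum_range_sub', Finset.sum_const, Finset.card_range,
          nsmul_eq_mul]
    _ ≤ 2 * Δ + T * C := by linarith [(abs_le.1 (ha 0)).2, (abs_le.1 (ha T)).1]

theorem stmt_12_general {Ω : Type*} [MeasureSpace Ω] [IsProbabilityMeasure (ℙ : Measure Ω)]
    {d : ℕ} (F : EuclideanSpace ℝ (Fin d) → ℝ)
    (F' : EuclideanSpace ℝ (Fin d) → EuclideanSpace ℝ (Fin d))
    (hF : ∀ θ, HasGradientAt F (F' θ) θ)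
    (μ Δ B M : ℝ) (hμ : 0 < μ) (hB0 : 0 ≤ B) (hB : B < 1 / 2)
    (hsmooth : ∀ θ₁ θ₂, ‖F' θ₁ - F' θ₂‖ ≤ μ * ‖θ₁ - θ₂‖)
    (hbound : ∀ θ, |F θ| ≤ Δ)
    (T : ℕ) (hT : 0 < T) (η : ℝ) (hη : η = 1 / (μ * Real.sqrt T))
    (ℱ : ℕ → MeasurableSpace Ω) (hℱle : ∀ t, ℱ t ≤ (inferInstance : MeasurableSpace Ω))
    (θ : ℕ → Ω → EuclideanSpace ℝ (Fin d)) (g : ℕ → Ω → EuclideanSpace ℝ (Fin d))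
    (hadapt : ∀ t, Measurable[ℱ t] (θ t))
    (hupdate : ∀ t ω, θ (t + 1) ω = θ t ω - η • g t ω)
    (hgint : ∀ t, MemLp (g t) 2 ℙ)
    (hFθint : ∀ t, Integrable (fun ω => F (θ t ω)) ℙ)
    (hgradint : ∀ t, MemLp (fun ω => F' (θ t ω)) 2 ℙ)
    (hbias : ∀ t, ∀ᵐ ω ∂ℙ,
      ‖MeasureTheory.condExp (ℱ t) ℙ (g t) ω - F' (θ t ω)‖ ≤ B * ‖F' (θ t ω)‖)
    (hmse : ∀ t, ∀ᵐ ω ∂ℙ,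
      MeasureTheory.condExp (ℱ t) ℙ (fun ω' => ‖g t ω' - F' (θ t ω')‖ ^ 2) ω ≤ M) :
    (1 / (T : ℝ)) * ∑ t ∈ Finset.range T, ∫ ω, ‖F' (θ t ω)‖ ^ 2
      ≤ (M + 4 * Δ * μ) / ((1 - 2 * B) * Real.sqrt T) := by
  have hF'cont : Continuous F' :=
    (LipschitzWith.of_dist_le_mul (K := μ.toNNReal) fun x y => by
      simpa only [dist_eq_norm, Real.coe_toNNReal μ hμ.le] using hsmooth x y).continuous
  have hη0 : 0 ≤ η := by rw [hη]; positivity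
  have hμη : μ * η ≤ 1 := by
    rw [hη, mul_one_div, div_le_one (by positivity)]
    exact le_mul_of_one_le_right hμ.le (Real.one_le_sqrt.2 (by exact_mod_cast hT))
  have hstep : ∀ t, η * (1 - 2 * B) / 2 * ∫ ω, ‖F' (θ t ω)‖ ^ 2
      ≤ (∫ ω, F (θ t ω)) - (∫ ω, F (θ (t + 1) ω)) + μ * η ^ 2 / 2 * M := by
    intro t
    simp only [hupdate t]
    exact integral_descent_of_biased_gradient_step (hℱle t) hF hsmooth hμ.le hB0 hη0 hμη
      (hF'cont.measurable.comp (hadapt t)).stronglyMeasurable (hgradint t) (hgint t) (hFθint t)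
      (by simpa only [hupdate t] using hFθint (t + 1)) (hbias t) (hmse t)
  have hmean : ∀ t, |∫ ω, F (θ t ω)| ≤ Δ := fun t => by
    simpa using norm_integral_le_of_norm_le_const
      (ae_of_all ℙ fun ω => (Real.norm_eq_abs _).trans_le (hbound (θ t ω)))
  have hsum := sum_range_le_of_le_sub_add hmean hstep T
  rw [← Finset.mul_sum] at hsum
  set S := ∑ t ∈ Finset.range T, ∫ ω, ‖F' (θ t ω)‖ ^ 2
  set s := √(T : ℝ)
  have hs : 0 < s := Real.sqrt_pos.2 (by exact_mod_cast hT)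
  have hTs : (T : ℝ) = s ^ 2 := (Real.sq_sqrt T.cast_nonneg).symm
  rw [hη, hTs] at hsum
  field_simp at hsum
  rw [hTs, one_div_mul_eq_div, div_le_div_iff₀ (by positivity) (by nlinarith)]
  nlinarith

/-- Convergence of SGD with biased gradient estimates: if `F` is differentiable,
`μ`-smooth and bounded by `Δ`, the gradient estimates `gᵗ` satisfy (conditionally
on the past, encoded by the filtration `ℱ`) `‖E[gᵗ|ℱ t] - ∇F(θᵗ)‖ ≤ B‖∇F(θᵗ)‖`
and `E[‖gᵗ - ∇F(θᵗ)‖²|ℱ t] ≤ M`, the iterates follow `θᵗ⁺¹ = θᵗ - ηgᵗ` for `T`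
steps with `B < 1/2` and `η = 1/(μ√T)`, then
`(1/T)∑ₜ E‖∇F(θᵗ)‖² ≤ (M + 4Δμ)/((1-2B)√T)`. -/
theorem stmt_12 {Ω : Type*} [MeasureSpace Ω] [IsProbabilityMeasure (ℙ : Measure Ω)]
    {d : ℕ} (F : EuclideanSpace ℝ (Fin d) → ℝ)
    (F' : EuclideanSpace ℝ (Fin d) → EuclideanSpace ℝ (Fin d))
    (hF : ∀ θ, HasGradientAt F (F' θ) θ)
    (μ Δ B M : ℝ) (hμ : 0 < μ) (hB0 : 0 ≤ B) (hB : B < 1 / 2) (hM : 0 ≤ M)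
    (hsmooth : ∀ θ₁ θ₂, ‖F' θ₁ - F' θ₂‖ ≤ μ * ‖θ₁ - θ₂‖)
    (hbound : ∀ θ, |F θ| ≤ Δ)
    (T : ℕ) (hT : 0 < T) (η : ℝ) (hη : η = 1 / (μ * Real.sqrt T))
    (ℱ : ℕ → MeasurableSpace Ω) (hℱle : ∀ t, ℱ t ≤ (inferInstance : MeasurableSpace Ω))
    (hℱmono : Monotone ℱ)
    (θ : ℕ → Ω → EuclideanSpace ℝ (Fin d)) (g : ℕ → Ω → EuclideanSpace ℝ (Fin d))
    (hadapt : ∀ t, Measurable[ℱ t] (θ t))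
    (hupdate : ∀ t ω, θ (t + 1) ω = θ t ω - η • g t ω)
    (hgint : ∀ t, MemLp (g t) 2 ℙ)
    (hFθint : ∀ t, Integrable (fun ω => F (θ t ω)) ℙ)
    (hgradint : ∀ t, MemLp (fun ω => F' (θ t ω)) 2 ℙ)
    (hbias : ∀ t, ∀ᵐ ω ∂ℙ,
      ‖MeasureTheory.condExp (ℱ t) ℙ (g t) ω - F' (θ t ω)‖ ≤ B * ‖F' (θ t ω)‖)
    (hmse : ∀ t, ∀ᵐ ω ∂ℙ,
      MeasureTheory.condExp (ℱ t) ℙ (fun ω' => ‖g t ω' - F' (θ t ω')‖ ^ 2) ω ≤ M) :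
    (1 / (T : ℝ)) * ∑ t ∈ Finset.range T, ∫ ω, ‖F' (θ t ω)‖ ^ 2
      ≤ (M + 4 * Δ * μ) / ((1 - 2 * B) * Real.sqrt T) :=
  stmt_12_general F F' hF μ Δ B M hμ hB0 hB hsmooth hbound T hT η hη ℱ hℱle θ g hadapt hupdate hgint
    hFθint hgradint hbias hmse
end
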